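/- Let H be a semisimple Hopf algebra over an algebraically closed field k of characteristic 0 with normalized integral Λ, and V, W finite-dimensional H-modules. The composite (V ⊗ W)^H → Hom_H(V*, W) → Hom_H(W*, V) → (W ⊗ V)^H, where the outer maps are the canonical bijections A (A(v⊗w)(φ) = φ(v)w) and the middle map sends f to its transpose f* (using S² = id to identify V** = V), equals the map v ⊗ w ↦ Λ₁w ⊗ Λ₂v, i.e., the flip followed by the projection onto invariants. -/

import Mathlib

/-!
Moving factors through the coproduct of an integral gives `(a ⊗ b)·ΔΛ = (1 ⊗ b S(a))·ΔΛ`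
(this is where `S² = id` enters); applied to `τ(ΔΛ) = Λ₂ ⊗ Λ₁`, together with
`Λ₁ S(Λ₂) = ε(Λ) = 1`, it yields `τ(ΔΛ)·ΔΛ = ΔΛ`. An invariant `x ∈ V ⊗ W` satisfies
`ΔΛ·x = x`, so `Λ·τ(x) = τ(τ(ΔΛ)·ΔΛ·x) = τ(x)`: on invariants the composite is the flip,
and the canonical map `A` turns the flip into transposition.
-/

open TensorProduct

/-- The submodule of invariants of a module `M` over a Hopf algebra `H`, for an action given
by a linear map `act : H →ₗ[k] End(M)`: those `x` with `h·x = ε(h)·x` for all `h`. -/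
def hopfInvariants {k H M : Type*} [Field k] [Ring H] [HopfAlgebra k H]
    [AddCommGroup M] [Module k M] (act : H →ₗ[k] (M →ₗ[k] M)) : Submodule k M where
  carrier := {x | ∀ h : H, act h x = Coalgebra.counit (R := k) h • x}
  add_mem' := by
    intro a b ha hb h
    simp [map_add, ha h, hb h, smul_add]
  zero_mem' := by intro h; simp
  smul_mem' := by
    intro c x hx h
    rw [map_smul, hx h, smul_comm]

open Coalgebra HopfAlgebra

def IsLeftIntegral (k : Type*) {H : Type*} [CommSemiring k] [Semiring H] [Bialgebra k H]
    (Λ : H) : Prop :=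
  ∀ h : H, h * Λ = counit (R := k) h • Λ

namespace HopfAlgebra

variable {k H : Type*} [CommSemiring k] [Semiring H] [HopfAlgebra k H]

/-- Evaluated on both sides of coassociativity for `Δh`, this computes `S(h₁) h₂ ⊗ h₃`
in two ways. -/
noncomputable def antipodeTmulOneMul : H ⊗[k] (H ⊗[k] H) →ₗ[k] H ⊗[k] H :=
  TensorProduct.lift (LinearMap.mul k (H ⊗[k] H) ∘ₗ
    Algebra.TensorProduct.includeLeft.toLinearMap ∘ₗ antipode k)

theorem antipodeTmulOneMul_tmul (a : H) (y : H ⊗[k] H) :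
    antipodeTmulOneMul (a ⊗ₜ y) = (antipode k a ⊗ₜ[k] (1 : H)) * y :=
  rfl

theorem antipodeTmulOneMul_comp_assoc :
    antipodeTmulOneMul ∘ₗ (TensorProduct.assoc k H H H).toLinearMap =
      (LinearMap.mul' k H ∘ₗ (antipode k).rTensor H).rTensor H := by
  refine TensorProduct.ext_threefold fun a b c => ?_
  simp [antipodeTmulOneMul_tmul]

theorem antipodeTmulOneMul_assoc_rTensor_comul (h : H) :
    antipodeTmulOneMul (TensorProduct.assoc k H H H ((comul (R := k)).rTensor H (comul h)))
      = 1 ⊗ₜ h := by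
  rw [← LinearEquiv.coe_toLinearMap, ← LinearMap.comp_apply, antipodeTmulOneMul_comp_assoc,
    ← LinearMap.comp_apply, ← LinearMap.rTensor_comp, LinearMap.comp_assoc,
    mul_antipode_rTensor_comul, LinearMap.rTensor_comp_apply, rTensor_counit_comul]
  simp

end HopfAlgebra

namespace IsLeftIntegral

variable {k H : Type*} [CommSemiring k] [Semiring H] [HopfAlgebra k H] {Λ : H}

theorem comul_mul_comul (hΛ : IsLeftIntegral k Λ) (h : H) :
    comul (R := k) h * comul Λ = counit (R := k) h • comul (R := k) Λ := by
  rw [← Bialgebra.comul_mul, hΛ h, map_smul]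

theorem antipodeTmulOneMul_lTensor_comul_mul (hΛ : IsLeftIntegral k Λ) (h : H) :
    antipodeTmulOneMul ((comul (R := k)).lTensor H (comul h)) * comul Λ
      = (antipode k h ⊗ₜ[k] (1 : H)) * comul Λ := by
  suffices ∀ t : H ⊗[k] H, antipodeTmulOneMul ((comul (R := k)).lTensor H t) * comul Λ
      = (antipode k (TensorProduct.rid k H ((counit (R := k)).lTensor H t)) ⊗ₜ[k] (1 : H))
          * comul Λ by
    simpa using this (comul h)
  intro t
  induction t using TensorProduct.induction_on with
  | zero => simp
  | add t₁ t₂ h₁ h₂ => simp only [map_add, add_mul, TensorProduct.add_tmul, h₁, h₂]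
  | tmul a b =>
    rw [LinearMap.lTensor_tmul, antipodeTmulOneMul_tmul, mul_assoc, hΛ.comul_mul_comul,
      mul_smul_comm, LinearMap.lTensor_tmul, TensorProduct.rid_tmul, map_smul, ← smul_mul_assoc,
      smul_tmul']

theorem one_tmul_mul_comul (hΛ : IsLeftIntegral k Λ) (h : H) :
    ((1 : H) ⊗ₜ[k] h) * comul Λ = (antipode k h ⊗ₜ[k] (1 : H)) * comul Λ := by
  rw [← antipodeTmulOneMul_assoc_rTensor_comul, coassoc_apply,
    hΛ.antipodeTmulOneMul_lTensor_comul_mul]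

theorem tmul_mul_comul (hΛ : IsLeftIntegral k Λ) (hS2 : ∀ h : H, antipode k (antipode k h) = h)
    (a b : H) : (a ⊗ₜ[k] b) * comul Λ = ((1 : H) ⊗ₜ[k] (b * antipode k a)) * comul Λ := by
  have hsplit : (a ⊗ₜ[k] b) = ((1 : H) ⊗ₜ[k] b) * (a ⊗ₜ[k] (1 : H)) := by
    rw [Algebra.TensorProduct.tmul_mul_tmul, one_mul, mul_one]
  rw [hsplit, mul_assoc, ← hS2 a, ← hΛ.one_tmul_mul_comul, hS2, ← mul_assoc,
    Algebra.TensorProduct.tmul_mul_tmul, one_mul]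

theorem comm_mul_comul (hΛ : IsLeftIntegral k Λ) (hS2 : ∀ h : H, antipode k (antipode k h) = h)
    (t : H ⊗[k] H) :
    TensorProduct.comm k H H t * comul Λ
      = ((1 : H) ⊗ₜ[k] LinearMap.mul' k H ((antipode k).lTensor H t)) * comul Λ := by
  induction t using TensorProduct.induction_on with
  | zero => simp
  | add t₁ t₂ h₁ h₂ => simp only [map_add, add_mul, TensorProduct.tmul_add, h₁, h₂]
  | tmul a b => simp [hΛ.tmul_mul_comul hS2]

theorem comm_comul_mul_comul (hΛ : IsLeftIntegral k Λ) (hnorm : counit (R := k) Λ = 1)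
    (hS2 : ∀ h : H, antipode k (antipode k h) = h) :
    TensorProduct.comm k H H (comul Λ) * comul Λ = comul (R := k) Λ := by
  rw [hΛ.comm_mul_comul hS2, mul_antipode_lTensor_comul_apply, hnorm, map_one,
    ← Algebra.TensorProduct.one_def, one_mul]

end IsLeftIntegral

section TensorRepresentation

variable {k H M N : Type*} [CommSemiring k] [Semiring H]
  [AddCommMonoid M] [Module k M] [AddCommMonoid N] [Module k N]

noncomputable def tensorAct [Algebra k H] (ρM : H →ₐ[k] Module.End k M)
    (ρN : H →ₐ[k] Module.End k N) : H ⊗[k] H →ₐ[k] Module.End k (M ⊗[k] N) :=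
  Module.endTensorEndAlgHom.comp (Algebra.TensorProduct.map ρM ρN)

noncomputable def tensorRep [Bialgebra k H] (ρM : H →ₐ[k] Module.End k M)
    (ρN : H →ₐ[k] Module.End k N) : H →ₐ[k] Module.End k (M ⊗[k] N) :=
  (tensorAct ρM ρN).comp (Bialgebra.comulAlgHom k H)

theorem tensorAct_comm_apply [Algebra k H] (ρM : H →ₐ[k] Module.End k M)
    (ρN : H →ₐ[k] Module.End k N) (u : H ⊗[k] H) (z : M ⊗[k] N) :
    tensorAct ρN ρM u (TensorProduct.comm k M N z)
      = TensorProduct.comm k M N (tensorAct ρM ρN (TensorProduct.comm k H H u) z) := by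
  induction u using TensorProduct.induction_on with
  | zero => simp
  | add u₁ u₂ h₁ h₂ => simp only [map_add, LinearMap.add_apply, h₁, h₂]
  | tmul a b =>
    induction z using TensorProduct.induction_on with
    | zero => simp
    | add z₁ z₂ h₁ h₂ => simp only [map_add, h₁, h₂]
    | tmul m n => rfl

end TensorRepresentation

section Invariants

variable {k H : Type*} [Field k] [Ring H] [HopfAlgebra k H] {Λ : H}

theorem IsLeftIntegral.apply_mem_hopfInvariants (hΛ : IsLeftIntegral k Λ) {M : Type*}
    [AddCommGroup M] [Module k M] (ρ : H →ₐ[k] Module.End k M) (m : M) :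
    ρ Λ m ∈ hopfInvariants ρ.toLinearMap := fun h => by
  change ρ h (ρ Λ m) = _
  rw [← Module.End.mul_apply, ← map_mul, hΛ h, map_smul]
  rfl

theorem IsLeftIntegral.tensorRep_apply_comm_of_mem_hopfInvariants (hΛ : IsLeftIntegral k Λ)
    (hnorm : counit (R := k) Λ = 1) (hS2 : ∀ h : H, antipode k (antipode k h) = h)
    {V W : Type*} [AddCommGroup V] [Module k V] [AddCommGroup W] [Module k W]
    (ρV : H →ₐ[k] Module.End k V) (ρW : H →ₐ[k] Module.End k W) {x : V ⊗[k] W}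
    (hx : x ∈ hopfInvariants (tensorRep ρV ρW).toLinearMap) :
    tensorRep ρW ρV Λ (TensorProduct.comm k V W x) = TensorProduct.comm k V W x := by
  have hΛx : tensorAct ρV ρW (comul Λ) x = x := by
    have := hx Λ
    rwa [hnorm, one_smul] at this
  calc tensorRep ρW ρV Λ (TensorProduct.comm k V W x)
      = TensorProduct.comm k V W (tensorAct ρV ρW (TensorProduct.comm k H H (comul Λ)) x) :=
        tensorAct_comm_apply ρV ρW _ x
    _ = TensorProduct.comm k V W
          (tensorAct ρV ρW (TensorProduct.comm k H H (comul Λ) * comul Λ) x) := by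
        rw [map_mul, Module.End.mul_apply, hΛx]
    _ = TensorProduct.comm k V W x := by
        rw [hΛ.comm_comul_mul_comul hnorm hS2, hΛx]

end Invariants

section Duality

variable (k : Type*) [CommSemiring k] (V W : Type*) [AddCommMonoid V] [Module k V]
  [AddCommMonoid W] [Module k W]

/-- The map `A` of the paper, `v ⊗ w ↦ (φ ↦ φ(v) w)`. -/
noncomputable def tensorToHomDual : V ⊗[k] W →ₗ[k] (Module.Dual k V →ₗ[k] W) :=
  dualTensorHom k (Module.Dual k V) W ∘ₗ TensorProduct.map (Module.Dual.eval k V) LinearMap.id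

variable {k V W}

theorem apply_tensorToHomDual_comm (x : V ⊗[k] W) (ψ : Module.Dual k W)
    (φ : Module.Dual k V) :
    φ (tensorToHomDual k W V (TensorProduct.comm k V W x) ψ)
      = ψ (tensorToHomDual k V W x φ) := by
  induction x using TensorProduct.induction_on with
  | zero => simp
  | add x₁ x₂ h₁ h₂ => simp only [map_add, LinearMap.add_apply, h₁, h₂]
  | tmul v w => simp [tensorToHomDual, mul_comm]

theorem tensorToHomDual_comm [Module.IsReflexive k V] (x : V ⊗[k] W) :
    tensorToHomDual k W V (TensorProduct.comm k V W x)
      = (Module.evalEquiv k V).symm.toLinearMap ∘ₗ (tensorToHomDual k V W x).dualMap := by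
  ext ψ
  rw [LinearMap.comp_apply, LinearEquiv.coe_coe, LinearEquiv.eq_symm_apply]
  ext φ
  exact apply_tensorToHomDual_comm x ψ φ

end Duality

theorem composite_eq_flip_projection_general {k H : Type*} [Field k]
    [Ring H] [HopfAlgebra k H] (Λ : H)
    (hint : ∀ h : H, h * Λ = Coalgebra.counit (R := k) h • Λ)
    (hnorm : Coalgebra.counit (R := k) Λ = 1)
    (hS2 : ∀ h : H, HopfAlgebra.antipode (R := k) (HopfAlgebra.antipode (R := k) h) = h)
    {V W : Type*} [AddCommGroup V] [Module k V] [FiniteDimensional k V]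
    [AddCommGroup W] [Module k W]
    (ρV : H →ₐ[k] Module.End k V) (ρW : H →ₐ[k] Module.End k W) :
    ∀ x ∈ hopfInvariants (TensorProduct.homTensorHomMap (RingHom.id k) V W V W ∘ₗ
        TensorProduct.map ρV.toLinearMap ρW.toLinearMap ∘ₗ Coalgebra.comul (R := k) (A := H)),
      (TensorProduct.homTensorHomMap (RingHom.id k) W V W V ∘ₗ
          TensorProduct.map ρW.toLinearMap ρV.toLinearMap ∘ₗ
            Coalgebra.comul (R := k) (A := H)) Λ ((TensorProduct.comm k V W) x)
        ∈ hopfInvariants (TensorProduct.homTensorHomMap (RingHom.id k) W V W V ∘ₗ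
            TensorProduct.map ρW.toLinearMap ρV.toLinearMap ∘ₗ
              Coalgebra.comul (R := k) (A := H)) ∧
      (dualTensorHom k (Module.Dual k W) V ∘ₗ
          TensorProduct.map (Module.Dual.eval k W) LinearMap.id)
        ((TensorProduct.homTensorHomMap (RingHom.id k) W V W V ∘ₗ
          TensorProduct.map ρW.toLinearMap ρV.toLinearMap ∘ₗ
            Coalgebra.comul (R := k) (A := H)) Λ ((TensorProduct.comm k V W) x))
        = (Module.evalEquiv k V).symm.toLinearMap ∘ₗ
            (((dualTensorHom k (Module.Dual k V) W ∘ₗ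
              TensorProduct.map (Module.Dual.eval k V) LinearMap.id) x).dualMap) := by
  intro x hx
  refine ⟨IsLeftIntegral.apply_mem_hopfInvariants hint (tensorRep ρW ρV) _, ?_⟩
  change tensorToHomDual k W V (tensorRep ρW ρV Λ (TensorProduct.comm k V W x)) = _
  rw [IsLeftIntegral.tensorRep_apply_comm_of_mem_hopfInvariants hint hnorm hS2 ρV ρW hx]
  exact tensorToHomDual_comm x

/-- Let `H` be a semisimple Hopf algebra over an algebraically closed field `k`
of characteristic 0 with normalized integral `Λ` and `S² = id` (Larson-Radford), and `V`, `W`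
finite-dimensional `H`-modules.  The composite
`(V ⊗ W)^H → Hom_H(V*, W) → Hom_H(W*, V) → (W ⊗ V)^H`, where the outer maps are the
canonical bijections `A` (`A(v⊗w)(φ) = φ(v)w`) and the middle map sends `f` to its transpose
`f*` (using `V** = V`), equals the map `v ⊗ w ↦ Λ₁w ⊗ Λ₂v`, i.e. the flip followed by the
projection onto invariants.  Equivalently: for `x` invariant, `Λ·τ(x)` is invariant and
`A(Λ·τ(x))` is the transpose of `A(x)`. -/
theorem composite_eq_flip_projection {k H : Type*} [Field k] [IsAlgClosed k] [CharZero k]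
    [Ring H] [HopfAlgebra k H] (Λ : H)
    (hint : ∀ h : H, h * Λ = Coalgebra.counit (R := k) h • Λ)
    (hnorm : Coalgebra.counit (R := k) Λ = 1)
    (hS2 : ∀ h : H, HopfAlgebra.antipode (R := k) (HopfAlgebra.antipode (R := k) h) = h)
    {V W : Type*} [AddCommGroup V] [Module k V] [FiniteDimensional k V]
    [AddCommGroup W] [Module k W] [FiniteDimensional k W]
    (ρV : H →ₐ[k] Module.End k V) (ρW : H →ₐ[k] Module.End k W) :
    ∀ x ∈ hopfInvariants (TensorProduct.homTensorHomMap (RingHom.id k) V W V W ∘ₗ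
        TensorProduct.map ρV.toLinearMap ρW.toLinearMap ∘ₗ Coalgebra.comul (R := k) (A := H)),
      (TensorProduct.homTensorHomMap (RingHom.id k) W V W V ∘ₗ
          TensorProduct.map ρW.toLinearMap ρV.toLinearMap ∘ₗ
            Coalgebra.comul (R := k) (A := H)) Λ ((TensorProduct.comm k V W) x)
        ∈ hopfInvariants (TensorProduct.homTensorHomMap (RingHom.id k) W V W V ∘ₗ
            TensorProduct.map ρW.toLinearMap ρV.toLinearMap ∘ₗ
              Coalgebra.comul (R := k) (A := H)) ∧
      (dualTensorHom k (Module.Dual k W) V ∘ₗ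
          TensorProduct.map (Module.Dual.eval k W) LinearMap.id)
        ((TensorProduct.homTensorHomMap (RingHom.id k) W V W V ∘ₗ
          TensorProduct.map ρW.toLinearMap ρV.toLinearMap ∘ₗ
            Coalgebra.comul (R := k) (A := H)) Λ ((TensorProduct.comm k V W) x))
        = (Module.evalEquiv k V).symm.toLinearMap ∘ₗ
            (((dualTensorHom k (Module.Dual k V) W ∘ₗ
              TensorProduct.map (Module.Dual.eval k V) LinearMap.id) x).dualMap) :=
  composite_eq_flip_projection_general Λ hint hnorm hS2 ρV ρW
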